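/- arXiv:2411.00695 — 2 statements merged into one kernel-verified Lean document; each statement's English description precedes it below -/
import Mathlib

section
/- Let R be a commutative ring, p,q ∈ R, and n,m ≥ 2 integers. In the algebra H = R⟨T_a,T_b | T_aⁿ = T_bᵐ, T_aT_b = T_bT_a = p(T_a+T_b)+q⟩, for all 1 ≤ k ≤ m one has T_a·T_bᵏ = p^{k−1}q + pᵏT_a + Σ_{i=1}^{k−1}(p²+q)p^{k−i−1}T_bⁱ + pT_bᵏ. -/
/-- The defining relations of `H = R⟨T_a,T_b | T_aⁿ = T_bᵐ, T_aT_b = T_bT_a = p(T_a+T_b)+q⟩`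
on the free associative `R`-algebra on two generators. -/
inductive TorusHeckeRel (R : Type*) [CommRing R] (p q : R) (n m : ℕ) :
    FreeAlgebra R (Fin 2) → FreeAlgebra R (Fin 2) → Prop
  | pow : TorusHeckeRel R p q n m (FreeAlgebra.ι R 0 ^ n) (FreeAlgebra.ι R 1 ^ m)
  | ab : TorusHeckeRel R p q n m (FreeAlgebra.ι R 0 * FreeAlgebra.ι R 1)
      (p • (FreeAlgebra.ι R 0 + FreeAlgebra.ι R 1) + algebraMap R _ q)
  | ba : TorusHeckeRel R p q n m (FreeAlgebra.ι R 1 * FreeAlgebra.ι R 0)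
      (p • (FreeAlgebra.ι R 0 + FreeAlgebra.ι R 1) + algebraMap R _ q)

/-- The algebra `H_{n,m}(p,q) = R⟨T_a,T_b | T_aⁿ = T_bᵐ, T_aT_b = T_bT_a = p(T_a+T_b)+q⟩`. -/
def TorusHecke (R : Type*) [CommRing R] (p q : R) (n m : ℕ) : Type _ :=
  RingQuot (TorusHeckeRel R p q n m)

noncomputable instance (R : Type*) [CommRing R] (p q : R) (n m : ℕ) :
    Ring (TorusHecke R p q n m) := by unfold TorusHecke; infer_instance

noncomputable instance (R : Type*) [CommRing R] (p q : R) (n m : ℕ) :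
    Algebra R (TorusHecke R p q n m) := by unfold TorusHecke; infer_instance

/-- The generator `T_a` of `H_{n,m}(p,q)`. -/
noncomputable def Ta (R : Type*) [CommRing R] (p q : R) (n m : ℕ) : TorusHecke R p q n m :=
  RingQuot.mkAlgHom R (TorusHeckeRel R p q n m) (FreeAlgebra.ι R 0)

/-- The generator `T_b` of `H_{n,m}(p,q)`. -/
noncomputable def Tb (R : Type*) [CommRing R] (p q : R) (n m : ℕ) : TorusHecke R p q n m :=
  RingQuot.mkAlgHom R (TorusHeckeRel R p q n m) (FreeAlgebra.ι R 1)


section MulPow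

variable {R A : Type*} [CommSemiring R] [Semiring A] [Algebra R A] {p q : R} {a b : A}

theorem mul_pow_succ_of_mul_eq (hab : a * b = p • a + p • b + algebraMap R A q) (k : ℕ) :
    a * b ^ (k + 1) =
      algebraMap R A (p ^ k * q) + p ^ (k + 1) • a +
        (∑ i ∈ Finset.range k, ((p ^ 2 + q) * p ^ (k - i - 1)) • b ^ (i + 1)) +
        p • b ^ (k + 1) := by
  induction k with
  | zero =>
    simp only [pow_zero, one_mul, zero_add, pow_one, Finset.range_zero, Finset.sum_empty,
      add_zero, hab]
    abel
  | succ k ih =>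
    have hsum : ∑ i ∈ Finset.range (k + 1), ((p ^ 2 + q) * p ^ (k + 1 - i - 1)) • b ^ (i + 1) =
        (∑ i ∈ Finset.range k, ((p ^ 2 + q) * p ^ (k - i - 1)) • b ^ (i + 1 + 1)) +
          (p ^ k * q + p ^ (k + 1 + 1)) • b := by
      rw [Finset.sum_range_succ']
      congr 1
      · refine Finset.sum_congr rfl fun i _ => ?_
        rw [show k + 1 - (i + 1) - 1 = k - i - 1 by omega]
      · simp only [Nat.sub_zero, add_tsub_cancel_right, zero_add, pow_one]
        congr 1
        ring
    calc a * b ^ (k + 1 + 1) = a * b ^ (k + 1) * b := by rw [pow_succ _ (k + 1), mul_assoc]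
      _ = (p ^ k * q) • b + p ^ (k + 1) • (a * b) +
          (∑ i ∈ Finset.range k, ((p ^ 2 + q) * p ^ (k - i - 1)) • b ^ (i + 1 + 1)) +
          p • b ^ (k + 1 + 1) := by
        rw [ih]
        simp only [add_mul, Finset.sum_mul, smul_mul_assoc, ← pow_succ, ← Algebra.smul_def]
      _ = _ := by
        rw [hsum, hab, smul_add, smul_add, smul_smul, smul_smul, ← pow_succ, add_smul,
          Algebra.smul_def (p ^ (k + 1)), ← map_mul]
        abel

end MulPow

theorem Ta_mul_Tb (R : Type*) [CommRing R] (p q : R) (n m : ℕ) :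
    Ta R p q n m * Tb R p q n m =
      p • Ta R p q n m + p • Tb R p q n m + algebraMap R _ q := by
  have h := RingQuot.mkAlgHom_rel R (TorusHeckeRel.ab (p := p) (q := q) (n := n) (m := m))
  rw [map_mul, map_add, map_smul, map_add, AlgHom.commutes, smul_add] at h
  exact h

theorem stmt_12_general (R : Type*) [CommRing R] (p q : R) (n m : ℕ)
    (k : ℕ) (hk1 : 1 ≤ k) :
    Ta R p q n m * Tb R p q n m ^ k =
      algebraMap R _ (p ^ (k - 1) * q) + p ^ k • Ta R p q n m +
        (∑ i ∈ Finset.Icc 1 (k - 1), ((p ^ 2 + q) * p ^ (k - i - 1)) • Tb R p q n m ^ i) +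
        p • Tb R p q n m ^ k := by
  obtain ⟨j, rfl⟩ := Nat.exists_eq_add_of_le' hk1
  rw [mul_pow_succ_of_mul_eq (Ta_mul_Tb R p q n m), Nat.add_sub_cancel,
    ← Finset.Ico_add_one_right_eq_Icc, Finset.sum_Ico_eq_sum_range, Nat.add_sub_cancel]
  refine congrArg (· + _) (congrArg (_ + ·) (Finset.sum_congr rfl fun i _ => ?_))
  rw [add_comm 1 i, show j + 1 - (i + 1) - 1 = j - i - 1 by omega]

/-- In `H_{n,m}(p,q)`, for `1 ≤ k ≤ m`:
`T_a·T_bᵏ = p^{k−1}q + pᵏT_a + Σ_{i=1}^{k−1}(p²+q)p^{k−i−1}T_bⁱ + pT_bᵏ`. -/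
theorem stmt_12 (R : Type*) [CommRing R] (p q : R) (n m : ℕ) (hn : 2 ≤ n) (hm : 2 ≤ m)
    (k : ℕ) (hk1 : 1 ≤ k) (hkm : k ≤ m) :
    Ta R p q n m * Tb R p q n m ^ k =
      algebraMap R _ (p ^ (k - 1) * q) + p ^ k • Ta R p q n m +
        (∑ i ∈ Finset.Icc 1 (k - 1), ((p ^ 2 + q) * p ^ (k - i - 1)) • Tb R p q n m ^ i) +
        p • Tb R p q n m ^ k :=
  stmt_12_general R p q n m k hk1
end

section
/- Let R be a commutative ring, p,q ∈ R, and n,m ≥ 2. The algebra H_{n,m}(p,q) = R⟨T_a,T_b | T_aⁿ = T_bᵐ, T_aT_b = T_bT_a = p(T_a+T_b)+q⟩ is a free R-module of rank n+m, with basis {1, T_a, T_a², …, T_aⁿ = T_bᵐ, T_b^{m−1}, …, T_b}. -/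
section General

variable {R A : Type*} [CommSemiring R] [Semiring A] [Algebra R A]

theorem Submodule.span_eq_top_of_mul_mem {s t : Set A} (hs : Algebra.adjoin R s = ⊤)
    (h1 : 1 ∈ span R t) (hmul : ∀ x ∈ s, ∀ y ∈ t, x * y ∈ span R t) : span R t = ⊤ := by
  have hM (x : A) (hx : x ∈ s) : ∀ y ∈ span R t, x * y ∈ span R t :=
    span_le (p := (span R t).comap (LinearMap.mulLeft R x)) |>.mpr (hmul x hx)
  refine eq_top_iff'.mpr fun z => ?_
  have hz : z ∈ Algebra.adjoin R s := hs ▸ Algebra.mem_top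
  suffices ∀ y ∈ span R t, z * y ∈ span R t by simpa using this 1 h1
  induction hz using Algebra.adjoin_induction with
  | mem x hx => exact hM x hx
  | algebraMap r => exact fun y hy => Algebra.smul_def r y ▸ smul_mem _ r hy
  | add x y _ _ hx hy => exact fun w hw => (add_mul x y w).symm ▸ add_mem (hx w hw) (hy w hw)
  | mul x y _ _ hx hy => exact fun w hw => (mul_assoc x y w).symm ▸ hx _ (hy w hw)

theorem Submodule.mul_pow_mem_of_mul_eq {p q : R} {a b : A}
    (hab : a * b = p • (a + b) + algebraMap R A q) {M : Submodule R A} {m : ℕ} (ha : a ∈ M)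
    (hb : ∀ k ≤ m, b ^ k ∈ M) : ∀ k ≤ m, a * b ^ k ∈ M
  | 0, _ => by simpa using ha
  | k + 1, hk => by
    have hrec : a * b ^ (k + 1) = p • (a * b ^ k) + p • b ^ (k + 1) + q • b ^ k := by
      rw [pow_succ', ← mul_assoc, hab, add_mul, smul_mul_assoc, add_mul, smul_add, ← pow_succ',
        ← Algebra.smul_def]
    rw [hrec]
    exact add_mem (add_mem (smul_mem _ _ (mul_pow_mem_of_mul_eq hab ha hb k (by omega)))
      (smul_mem _ _ (hb _ hk))) (smul_mem _ _ (hb k (by omega)))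

end General

theorem Module.End.eq_of_commute_of_span_range {R M ι : Type*} [Semiring R] [AddCommMonoid M]
    [Module R M] {f g : Module.End R M} {s : ι → Module.End R M} {v : M}
    (hspan : Submodule.span R (Set.range fun i => s i v) = ⊤) (hf : ∀ i, Commute f (s i))
    (hg : ∀ i, Commute g (s i)) (hv : f v = g v) : f = g :=
  LinearMap.ext_on_range hspan fun i => by
    rw [← Module.End.mul_apply, (hf i).eq, Module.End.mul_apply, hv, ← Module.End.mul_apply,
      ← (hg i).eq, Module.End.mul_apply]

section CrossSeq

variable {R M : Type*} [CommSemiring R] [AddCommMonoid M] [Module R M] (p q : R)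

/-- With `u j = T_aʲ` and `v = T_b`, this is `T_b T_aʲ`, expanded by
`T_b T_a^(j+1) = (p (T_a + T_b) + q) T_aʲ`. -/
def crossSeq (u : ℕ → M) (v : M) : ℕ → M
  | 0 => v
  | k + 1 => p • crossSeq u v k + p • u (k + 1) + q • u k

variable {p q}

theorem apply_crossSeq {F : M →ₗ[R] M} {u : ℕ → M} {v : M} {n : ℕ}
    (hu : ∀ j < n, F (u j) = u (j + 1)) (hv : F v = p • F (u 0) + p • v + q • u 0) :
    ∀ j ≤ n, F (crossSeq p q u v j) = p • F (u j) + p • crossSeq p q u v j + q • u j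
  | 0, _ => hv
  | j + 1, hj => by
    simp only [crossSeq, map_add, map_smul, apply_crossSeq hu hv j (by omega), hu j (by omega)]
    module

end CrossSeq

namespace TorusHecke

section Monomial

variable {S T : Type*} [Monoid S] [Monoid T] {n m : ℕ} {a b c : S}

def monomial (n m : ℕ) (a b : S) (i : Fin (n + m)) : S :=
  if (i : ℕ) ≤ n then a ^ (i : ℕ) else b ^ (n + m - i)

theorem map_monomial {F : Type*} [FunLike F S T] [MonoidHomClass F S T] (f : F)
    (i : Fin (n + m)) : f (monomial n m a b i) = monomial n m (f a) (f b) i := by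
  unfold monomial
  split_ifs <;> exact map_pow f _ _

theorem _root_.Commute.monomial (ha : Commute c a) (hb : Commute c b) (i : Fin (n + m)) :
    Commute c (monomial n m a b i) := by
  unfold TorusHecke.monomial
  split_ifs
  exacts [ha.pow_right _, hb.pow_right _]

theorem pow_left_mem_range_monomial [NeZero m] {j : ℕ} (hj : j ≤ n) :
    a ^ j ∈ Set.range (monomial n m a b) :=
  ⟨⟨j, by have := NeZero.pos m; omega⟩, if_pos hj⟩

theorem pow_right_mem_range_monomial [NeZero m] (h : a ^ n = b ^ m) {k : ℕ} (hk : k ≤ m) :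
    b ^ k ∈ Set.range (monomial n m a b) := by
  rcases hk.eq_or_lt with rfl | hk
  · exact h ▸ pow_left_mem_range_monomial le_rfl
  rcases k.eq_zero_or_pos with rfl | hk₀
  · simpa using pow_left_mem_range_monomial (b := b) (Nat.zero_le n)
  refine ⟨⟨n + m - k, by omega⟩, ?_⟩
  rw [monomial, if_neg (by simp only; omega), Nat.sub_sub_self (by omega)]

end Monomial

variable {R : Type*} [CommRing R] {p q : R} {n m : ℕ}

theorem Ta_pow_eq_Tb_pow : Ta R p q n m ^ n = Tb R p q n m ^ m := by
  have h := RingQuot.mkAlgHom_rel R (TorusHeckeRel.pow (R := R) (p := p) (q := q) (n := n) (m := m))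
  rwa [map_pow, map_pow] at h

theorem Ta_mul_Tb :
    Ta R p q n m * Tb R p q n m = p • (Ta R p q n m + Tb R p q n m) + algebraMap R _ q := by
  have h := RingQuot.mkAlgHom_rel R (TorusHeckeRel.ab (R := R) (p := p) (q := q) (n := n) (m := m))
  rwa [map_mul, map_add, map_smul, map_add, AlgHom.commutes] at h

theorem Tb_mul_Ta :
    Tb R p q n m * Ta R p q n m = p • (Ta R p q n m + Tb R p q n m) + algebraMap R _ q := by
  have h := RingQuot.mkAlgHom_rel R (TorusHeckeRel.ba (R := R) (p := p) (q := q) (n := n) (m := m))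
  rwa [map_mul, map_add, map_smul, map_add, AlgHom.commutes] at h

theorem adjoin_Ta_Tb : Algebra.adjoin R {Ta R p q n m, Tb R p q n m} = ⊤ := by
  refine Algebra.eq_top_iff.mpr fun z => ?_
  obtain ⟨w, rfl⟩ := RingQuot.mkAlgHom_surjective R (TorusHeckeRel R p q n m) z
  induction w using FreeAlgebra.induction with
  | grade0 r =>
    rw [AlgHom.commutes]
    exact Subalgebra.algebraMap_mem _ r
  | grade1 x =>
    fin_cases x
    exacts [Algebra.subset_adjoin (Or.inl rfl), Algebra.subset_adjoin (Or.inr rfl)]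
  | mul a b ha hb => rw [map_mul]; exact mul_mem ha hb
  | add a b ha hb => rw [map_add]; exact add_mem ha hb

theorem span_range_monomial [NeZero n] [NeZero m] :
    Submodule.span R (Set.range (monomial n m (Ta R p q n m) (Tb R p q n m))) = ⊤ := by
  set M := Submodule.span R (Set.range (monomial n m (Ta R p q n m) (Tb R p q n m)))
  have hTa (j : ℕ) (hj : j ≤ n) : Ta R p q n m ^ j ∈ M :=
    Submodule.subset_span (pow_left_mem_range_monomial hj)
  have hTb (k : ℕ) (hk : k ≤ m) : Tb R p q n m ^ k ∈ M :=
    Submodule.subset_span (pow_right_mem_range_monomial Ta_pow_eq_Tb_pow hk)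
  have hTaTb : ∀ k ≤ m, Ta R p q n m * Tb R p q n m ^ k ∈ M :=
    Submodule.mul_pow_mem_of_mul_eq Ta_mul_Tb (by simpa using hTa 1 NeZero.one_le) hTb
  have hTbTa : ∀ j ≤ n, Tb R p q n m * Ta R p q n m ^ j ∈ M :=
    Submodule.mul_pow_mem_of_mul_eq (by rw [Tb_mul_Ta, add_comm (Ta _ _ _ _ _)])
      (by simpa using hTb 1 NeZero.one_le) hTa
  refine Submodule.span_eq_top_of_mul_mem adjoin_Ta_Tb (by simpa using hTa 0 (Nat.zero_le n)) ?_
  rintro x (rfl | rfl) _ ⟨i, rfl⟩ <;> unfold monomial <;> split_ifs with hi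
  · rcases hi.lt_or_eq with hi | hi
    · exact pow_succ' (Ta R p q n m) i ▸ hTa _ hi
    · rw [hi, Ta_pow_eq_Tb_pow]
      exact hTaTb m le_rfl
  · exact hTaTb _ (by omega)
  · exact hTbTa _ hi
  · exact pow_succ' (Tb R p q n m) _ ▸ hTb _ (by omega)

section Lift

variable {S : Type*} [Semiring S] [Algebra R S]

def lift (a b : S) (hpow : a ^ n = b ^ m) (hab : a * b = p • (a + b) + algebraMap R S q)
    (hba : b * a = p • (a + b) + algebraMap R S q) : TorusHecke R p q n m →ₐ[R] S :=
  RingQuot.liftAlgHom R ⟨FreeAlgebra.lift R ![a, b], by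
    rintro _ _ (_ | _ | _) <;>
      simpa only [map_pow, map_mul, map_add, map_smul, AlgHom.commutes, FreeAlgebra.lift_ι_apply,
        Matrix.cons_val_zero, Matrix.cons_val_one]⟩

variable {a b : S} {hpow : a ^ n = b ^ m} {hab : a * b = p • (a + b) + algebraMap R S q}
  {hba : b * a = p • (a + b) + algebraMap R S q}

theorem lift_Ta : lift a b hpow hab hba (Ta R p q n m) = a := by
  rw [lift, Ta]
  erw [RingQuot.liftAlgHom_mkAlgHom_apply]
  rw [FreeAlgebra.lift_ι_apply, Matrix.cons_val_zero]

theorem lift_Tb : lift a b hpow hab hba (Tb R p q n m) = b := by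
  rw [lift, Tb]
  erw [RingQuot.liftAlgHom_mkAlgHom_apply]
  rw [FreeAlgebra.lift_ι_apply, Matrix.cons_val_one, Matrix.cons_val_zero]

end Lift

section Regular

variable (p q n m) [NeZero m]

noncomputable def ea (j : ℕ) : Fin (n + m) → R := Pi.single (Fin.ofNat (n + m) j) 1

noncomputable def eb (k : ℕ) : Fin (n + m) → R := ea n m (n + m - k)

/-- Left multiplication by `T_a` in the claimed basis, where `ea j` stands for `T_aʲ` and `eb k`
for `T_bᵏ` (indices of `ea` are read mod `n + m`, so `eb 0 = ea 0` and `eb m = ea n`);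
`crossSeq` supplies the normal forms of `T_a T_bᵏ`, and of `T_b T_aʲ` in `opB`. -/
noncomputable def opA : Module.End R (Fin (n + m) → R) :=
  (Pi.basisFun R _).constr R fun i =>
    if (i : ℕ) < n then ea n m (i + 1) else crossSeq p q (eb n m) (ea n m 1) (n + m - i)

noncomputable def opB : Module.End R (Fin (n + m) → R) :=
  (Pi.basisFun R _).constr R fun i =>
    if (i : ℕ) ≤ n then crossSeq p q (ea n m) (eb n m 1) i else eb n m (n + m - i + 1)

variable {p q n m}

theorem ea_val (i : Fin (n + m)) : ea n m i = (Pi.single i 1 : Fin (n + m) → R) := by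
  rw [ea, Fin.ofNat_val_eq_self]

theorem eb_zero : eb n m 0 = (ea n m 0 : Fin (n + m) → R) := by
  rw [eb, Nat.sub_zero, ea, ea, Fin.ofNat_self, Fin.ofNat_zero]

theorem eb_self : eb n m m = (ea n m n : Fin (n + m) → R) := by
  rw [eb, Nat.add_sub_cancel]

theorem constr_ea (f : Fin (n + m) → Fin (n + m) → R) (j : ℕ) :
    (Pi.basisFun R _).constr R f (ea n m j) = f (Fin.ofNat (n + m) j) := by
  rw [ea, ← Pi.basisFun_apply, Module.Basis.constr_basis]

theorem opA_ea {j : ℕ} (hj : j < n) : opA p q n m (ea n m j) = ea n m (j + 1) := by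
  rw [opA, constr_ea, Fin.val_ofNat, Nat.mod_eq_of_lt (by omega), if_pos hj]

theorem opA_eb [NeZero n] {k : ℕ} (hk : k ≤ m) :
    opA p q n m (eb n m k) = crossSeq p q (eb n m) (ea n m 1) k := by
  rcases k.eq_zero_or_pos with rfl | hk₀
  · rw [eb_zero, opA_ea (NeZero.pos n)]
    rfl
  rw [eb, opA, constr_ea, Fin.val_ofNat, Nat.mod_eq_of_lt (by omega), if_neg (by omega),
    Nat.sub_sub_self (by omega)]

theorem opB_ea {j : ℕ} (hj : j ≤ n) :
    opB p q n m (ea n m j) = crossSeq p q (ea n m) (eb n m 1) j := by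
  have := NeZero.pos m
  rw [opB, constr_ea, Fin.val_ofNat, Nat.mod_eq_of_lt (by omega), if_pos hj]

theorem opB_eb {k : ℕ} (hk : k < m) : opB p q n m (eb n m k) = eb n m (k + 1) := by
  rcases k.eq_zero_or_pos with rfl | hk₀
  · rw [eb_zero, opB_ea (Nat.zero_le n)]
    rfl
  rw [eb, opB, constr_ea, Fin.val_ofNat, Nat.mod_eq_of_lt (by omega), if_neg (by omega),
    Nat.sub_sub_self (by omega)]

theorem ext_ea_eb {f g : Module.End R (Fin (n + m) → R)}
    (ha : ∀ j ≤ n, f (ea n m j) = g (ea n m j)) (hb : ∀ k < m, f (eb n m k) = g (eb n m k)) :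
    f = g := by
  refine (Pi.basisFun R _).ext fun i => ?_
  rw [Pi.basisFun_apply, ← ea_val]
  by_cases hi : (i : ℕ) ≤ n
  · exact ha i hi
  · have hi' : ea n m i = (eb n m (n + m - i) : Fin (n + m) → R) := by
      rw [eb, Nat.sub_sub_self i.isLt.le]
    rw [hi']
    exact hb _ (by omega)

theorem opA_mul_opB [NeZero n] :
    opA p q n m * opB p q n m = p • (opA p q n m + opB p q n m) + algebraMap R _ q := by
  refine ext_ea_eb (fun j hj => ?_) (fun k hk => ?_) <;>
    simp only [Module.End.mul_apply, LinearMap.add_apply, LinearMap.smul_apply,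
      Module.algebraMap_end_apply, smul_add]
  · rw [opB_ea hj]
    refine apply_crossSeq (F := opA p q n m) (u := ea n m) (fun j hj => opA_ea hj) ?_ j hj
    rw [opA_eb NeZero.one_le, opA_ea (NeZero.pos n), ← eb_zero]
    rfl
  · rw [opB_eb hk, opA_eb hk, opA_eb hk.le]
    rfl

theorem opB_mul_opA [NeZero n] :
    opB p q n m * opA p q n m = p • (opA p q n m + opB p q n m) + algebraMap R _ q := by
  have hb (k : ℕ) (hk : k ≤ m) : opB p q n m (opA p q n m (eb n m k)) =
      p • (opA p q n m (eb n m k) + opB p q n m (eb n m k)) + q • eb n m k := by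
    rw [opA_eb hk, smul_add, add_comm (p • _)]
    refine apply_crossSeq (F := opB p q n m) (u := eb n m) (fun k hk => opB_eb hk) ?_ k hk
    rw [opB_eb (NeZero.pos m), eb_zero, opB_ea NeZero.one_le]
    rfl
  refine ext_ea_eb (fun j hj => ?_) (fun k hk => ?_) <;>
    simp only [Module.End.mul_apply, LinearMap.add_apply, LinearMap.smul_apply,
      Module.algebraMap_end_apply]
  · rcases hj.lt_or_eq with hj | rfl
    · rw [opA_ea hj, opB_ea hj, opB_ea hj.le]
      simp only [crossSeq]
      module
    · rw [← eb_self]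
      exact hb m le_rfl
  · exact hb k hk.le

theorem opA_pow_ea_zero : ∀ j ≤ n, (opA p q n m ^ j) (ea n m 0) = ea n m j
  | 0, _ => rfl
  | j + 1, hj => by
    rw [pow_succ', Module.End.mul_apply, opA_pow_ea_zero j (by omega), opA_ea (by omega)]

theorem opB_pow_ea_zero : ∀ k ≤ m, (opB p q n m ^ k) (ea n m 0) = eb n m k
  | 0, _ => eb_zero.symm
  | k + 1, hk => by
    rw [pow_succ', Module.End.mul_apply, opB_pow_ea_zero k (by omega), opB_eb (by omega)]

theorem monomial_apply_ea_zero (i : Fin (n + m)) :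
    monomial n m (opA p q n m) (opB p q n m) i (ea n m 0) = Pi.single i 1 := by
  rw [← ea_val, monomial]
  split_ifs with hi
  · exact opA_pow_ea_zero i hi
  · rw [opB_pow_ea_zero _ (by omega), eb, Nat.sub_sub_self i.isLt.le]

theorem opA_pow_eq_opB_pow [NeZero n] : opA p q n m ^ n = opB p q n m ^ m := by
  have hAB : Commute (opA p q n m) (opB p q n m) := opA_mul_opB.trans opB_mul_opA.symm
  refine Module.End.eq_of_commute_of_span_range (s := monomial n m (opA p q n m) (opB p q n m))
    (v := ea n m 0) ?_ (((Commute.refl _).pow_left n).monomial (hAB.pow_left n))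
    ((hAB.symm.pow_left m).monomial ((Commute.refl _).pow_left m)) ?_
  · simp_rw [monomial_apply_ea_zero, ← Pi.basisFun_apply]
    exact (Pi.basisFun R _).span_eq
  · rw [opA_pow_ea_zero n le_rfl, opB_pow_ea_zero m le_rfl, eb_self]

variable (p q n m)

noncomputable def regularRep [NeZero n] :
    TorusHecke R p q n m →ₐ[R] Module.End R (Fin (n + m) → R) :=
  lift (opA p q n m) (opB p q n m) opA_pow_eq_opB_pow opA_mul_opB opB_mul_opA

theorem linearIndependent_monomial [NeZero n] :
    LinearIndependent R (monomial n m (Ta R p q n m) (Tb R p q n m)) := by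
  let φ := (LinearMap.applyₗ (ea n m 0)).comp (regularRep p q n m).toLinearMap
  have hφ : φ ∘ monomial n m (Ta R p q n m) (Tb R p q n m) = Pi.basisFun R (Fin (n + m)) := by
    funext i
    rw [Pi.basisFun_apply, ← monomial_apply_ea_zero, Function.comp_apply, LinearMap.comp_apply,
      AlgHom.toLinearMap_apply, map_monomial, regularRep, lift_Ta, lift_Tb]
    rfl
  exact .of_comp φ (hφ ▸ (Pi.basisFun R _).linearIndependent)

end Regular

end TorusHecke

/-- `H_{n,m}(p,q)` is a free `R`-module of rank `n+m`, with basis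
`{1, T_a, T_a², …, T_aⁿ (= T_bᵐ), T_b^{m−1}, …, T_b}`. -/
theorem stmt_13 (R : Type*) [CommRing R] (p q : R) (n m : ℕ) (hn : 2 ≤ n) (hm : 2 ≤ m) :
    ∃ b : Module.Basis (Fin (n + m)) R (TorusHecke R p q n m),
      ∀ i : Fin (n + m),
        b i = if (i : ℕ) ≤ n then Ta R p q n m ^ (i : ℕ)
              else Tb R p q n m ^ (n + m - (i : ℕ)) := by
  have : NeZero n := ⟨by omega⟩
  have : NeZero m := ⟨by omega⟩
  exact ⟨.mk (TorusHecke.linearIndependent_monomial p q n m) TorusHecke.span_range_monomial.ge,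
    Module.Basis.mk_apply _ _⟩
end
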